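/- Switching identity for fixed total current: let γ₁ and γ₂ be loops supported in B_N with concatenation γ₁ + γ₂, and let n ∈ 𝒞_{γ₁+γ₂}. Then Σ_{n₁ ∈ 𝒞_{γ₁}, n₁ ≤ n} binom(n, n₁) = 1(∃ q ∈ 𝒞_{γ₁} with q ≤ n) · Σ_{n₁ ∈ 𝒞₀, n₁ ≤ n} binom(n, n₁), where binom(n, n₁) = Π_{p∈C_2(B_N)^+} C(n(p), n₁(p)). -/

import Mathlib

open scoped Classical

namespace LGT

/-- A site (vertex) of the lattice `ℤ^m`. -/
abbrev Site (m : ℕ) := Fin m → ℤ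

/-- The `i`-th unit vector. -/
def unitVec (m : ℕ) (i : Fin m) : Site m := fun j => if j = i then 1 else 0

/-- An oriented nearest-neighbour edge of `ℤ^m`: it joins `base` and `base + e_dir`,
oriented from `base` to `base + e_dir` when `ori = true`, and oppositely otherwise. -/
structure OEdge (m : ℕ) where
  base : Site m
  dir : Fin m
  ori : Bool
deriving DecidableEq

/-- An oriented plaquette of `ℤ^m` (valid when `dir1 < dir2`): the unit square with
corners `base, base + e_dir1, base + e_dir2, base + e_dir1 + e_dir2`, positively
oriented when `ori = true`. -/
structure OPlaq (m : ℕ) where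
  base : Site m
  dir1 : Fin m
  dir2 : Fin m
  ori : Bool
deriving DecidableEq

/-- The same edge with reversed orientation. -/
def OEdge.neg {m : ℕ} (e : OEdge m) : OEdge m := ⟨e.base, e.dir, !e.ori⟩

/-- The same plaquette with reversed orientation. -/
def OPlaq.neg {m : ℕ} (p : OPlaq m) : OPlaq m := ⟨p.base, p.dir1, p.dir2, !p.ori⟩

/-- The source vertex of an oriented edge. -/
def OEdge.src {m : ℕ} (e : OEdge m) : Site m :=
  if e.ori then e.base else e.base + unitVec m e.dir

/-- The target vertex of an oriented edge. -/
def OEdge.tgt {m : ℕ} (e : OEdge m) : Site m :=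
  if e.ori then e.base + unitVec m e.dir else e.base

/-- `x ∈ B_N = [-N,N]^m ∩ ℤ^m`. -/
def inBox (m N : ℕ) (x : Site m) : Prop := ∀ i, |x i| ≤ (N : ℤ)

/-- `C_1(B_N)`: oriented edges with both endpoints in `B_N`. -/
def C1 (m N : ℕ) : Set (OEdge m) :=
  {e | inBox m N e.base ∧ inBox m N (e.base + unitVec m e.dir)}

/-- The four corners of a plaquette. -/
def OPlaq.corners {m : ℕ} (p : OPlaq m) : List (Site m) :=
  [p.base, p.base + unitVec m p.dir1, p.base + unitVec m p.dir2,
    p.base + unitVec m p.dir1 + unitVec m p.dir2]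

/-- The four oriented boundary edges of an oriented plaquette. -/
def OPlaq.bdry {m : ℕ} (p : OPlaq m) : List (OEdge m) :=
  let l : List (OEdge m) :=
    [⟨p.base, p.dir1, true⟩, ⟨p.base + unitVec m p.dir1, p.dir2, true⟩,
     ⟨p.base + unitVec m p.dir2, p.dir1, false⟩, ⟨p.base, p.dir2, false⟩]
  if p.ori then l else l.map OEdge.neg

/-- `C_2(B_N)`: oriented plaquettes with all corners in `B_N`. -/
def C2 (m N : ℕ) : Set (OPlaq m) :=
  {p | p.dir1 < p.dir2 ∧ ∀ x ∈ p.corners, inBox m N x}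

/-- `C_2(B_N)^+`: positively oriented plaquettes of `C_2(B_N)`. -/
def C2plus (m N : ℕ) : Set (OPlaq m) := {p | p ∈ C2 m N ∧ p.ori = true}

/-- `supp ∂̂e`: the plaquettes of `C_2(B_N)` whose oriented boundary contains `e`. -/
def cob (m N : ℕ) (e : OEdge m) : Set (OPlaq m) := {p | p ∈ C2 m N ∧ e ∈ p.bdry}

/-- A loop: a finitely supported `ℤ`-valued function on oriented edges with values in
`{-1,0,1}`, odd under orientation reversal, whose boundary vanishes as a `0`-chain. -/
structure IsLoop (m : ℕ) (γ : OEdge m → ℤ) : Prop where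
  finite_supp : (Function.support γ).Finite
  vals : ∀ e, γ e = -1 ∨ γ e = 0 ∨ γ e = 1
  antisym : ∀ e, γ (OEdge.neg e) = - γ e
  bdry_zero : ∀ v : Site m,
    (∑ᶠ e : OEdge m, γ e *
      ((if OEdge.tgt e = v then 1 else 0) - (if OEdge.src e = v then (1 : ℤ) else 0))) = 0

/-- A loop supported in `B_N`. -/
def LoopIn (m N : ℕ) (γ : OEdge m → ℤ) : Prop :=
  IsLoop m γ ∧ ∀ e, γ e ≠ 0 → e ∈ C1 m N

/-- `Ω^1(B_N, ℤ₂)`: `ℤ₂`-valued one-forms on `C_1(B_N)`. -/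
def Omega1 (m N : ℕ) : Set (OEdge m → ZMod 2) :=
  {σ | (∀ e, e ∉ C1 m N → σ e = 0) ∧ ∀ e, σ (OEdge.neg e) = - σ e}

/-- The natural representation `ρ(g) = e^{iπ g} ∈ {±1}` of `ℤ₂`. -/
noncomputable def rho (g : ZMod 2) : ℝ := if g = 0 then 1 else -1

/-- The exterior derivative `dσ(p) = Σ_{e ∈ ∂p} σ(e)`. -/
def dOne {m : ℕ} (σ : OEdge m → ZMod 2) (p : OPlaq m) : ZMod 2 := (p.bdry.map σ).sum

/-- The Wilson action `S(σ) = -Σ_{p ∈ C_2(B_N)} ρ(dσ(p))`. -/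
noncomputable def action (m N : ℕ) (σ : OEdge m → ZMod 2) : ℝ :=
  - ∑ᶠ p ∈ C2 m N, rho (dOne σ p)

/-- The Wilson loop variable `W_γ(σ) = Π_{e ∈ (supp γ)^+} ρ(σ(e))`. -/
noncomputable def wilson (m : ℕ) (γ : OEdge m → ℤ) (σ : OEdge m → ZMod 2) : ℝ :=
  ∏ᶠ e ∈ {e : OEdge m | γ e ≠ 0 ∧ e.ori = true}, rho (σ e)

/-- `Z_{β,N}[γ] = Σ_{σ ∈ Ω^1(B_N,ℤ₂)} W_γ(σ) e^{-β S(σ)}`. -/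
noncomputable def Z (m N : ℕ) (β : ℝ) (γ : OEdge m → ℤ) : ℝ :=
  ∑ᶠ σ ∈ Omega1 m N, wilson m γ σ * Real.exp (- β * action m N σ)

/-- The finite-volume Gibbs expectation `E_{N,β}[f]`. -/
noncomputable def Eexp (m N : ℕ) (β : ℝ) (f : (OEdge m → ZMod 2) → ℝ) : ℝ :=
  (∑ᶠ σ ∈ Omega1 m N, f σ * Real.exp (- β * action m N σ)) /
    (∑ᶠ σ ∈ Omega1 m N, Real.exp (- β * action m N σ))

/-- `E_{N,β}[W_γ]`. -/
noncomputable def Ewilson (m N : ℕ) (β : ℝ) (γ : OEdge m → ℤ) : ℝ :=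
  Eexp m N β (wilson m γ)

/-- A current: an integer-valued `2`-form on `C_2(B_N)` that is nonnegative on
positively oriented plaquettes. -/
def IsCurrent (m N : ℕ) (n : OPlaq m → ℤ) : Prop :=
  (∀ p, p ∉ C2 m N → n p = 0) ∧ (∀ p, n (OPlaq.neg p) = - n p) ∧
    (∀ p ∈ C2plus m N, 0 ≤ n p)

/-- `𝒞_γ`: the currents with source `γ`. -/
def CurSet (m N : ℕ) (γ : OEdge m → ℤ) : Set (OPlaq m → ℤ) :=
  {n | IsCurrent m N n ∧ ∀ e ∈ C1 m N,
      ((γ e : ZMod 2) + ∑ᶠ p ∈ cob m N e, ((n p : ZMod 2))) = 0}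

/-- The weight `w_β(n) = Π_{p ∈ C_2(B_N)^+} (2β)^{n(p)}/n(p)!` of a current. -/
noncomputable def wgt (m N : ℕ) (β : ℝ) (n : OPlaq m → ℤ) : ℝ :=
  ∏ᶠ p ∈ C2plus m N, (2 * β) ^ (n p).toNat / (Nat.factorial (n p).toNat)

/-- `q ≤ n` on positively oriented plaquettes. -/
def leOn (m N : ℕ) (q n : OPlaq m → ℤ) : Prop := ∀ p ∈ C2plus m N, q p ≤ n p

/-- `𝒫_γ^{ht}`: `ℤ₂`-valued `2`-forms on `C_2(B_N)` with `δω = γ (mod 2)`. -/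
def HTset (m N : ℕ) (γ : OEdge m → ℤ) : Set (OPlaq m → ZMod 2) :=
  {ω | (∀ p, p ∉ C2 m N → ω p = 0) ∧ (∀ p, ω (OPlaq.neg p) = - ω p) ∧
    ∀ e ∈ C1 m N, (∑ᶠ p ∈ cob m N e, ω p) = (γ e : ZMod 2)}

/-- `(supp ω)^+`. -/
def suppPlus (m N : ℕ) (ω : OPlaq m → ZMod 2) : Set (OPlaq m) :=
  {p | p ∈ C2plus m N ∧ ω p ≠ 0}

/-- The high-temperature weight `(tanh 2β)^{|(supp ω)^+|}`. -/
noncomputable def htWeight (m N : ℕ) (β : ℝ) (ω : OPlaq m → ZMod 2) : ℝ :=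
  Real.tanh (2 * β) ^ (Nat.card ↥(suppPlus m N ω))

/-- The high-temperature model `P^γ_{B_N,β}`: probability mass of `ω ∈ 𝒫_γ^{ht}`. -/
noncomputable def htProb (m N : ℕ) (β : ℝ) (γ : OEdge m → ℤ) (ω : OPlaq m → ZMod 2) : ℝ :=
  htWeight m N β ω / ∑ᶠ ω' ∈ HTset m N γ, htWeight m N β ω'

/-- The random current model `𝐏^γ_{B_N,β}`: probability of an event `A ⊆ 𝒞_γ`. -/
noncomputable def rcProb (m N : ℕ) (β : ℝ) (γ : OEdge m → ℤ) (A : Set (OPlaq m → ℤ)) : ℝ :=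
  (∑' n : ↥(CurSet m N γ ∩ A), wgt m N β n) / (∑' n : ↥(CurSet m N γ), wgt m N β n)

/-- The trace `n̂` of a current: the set of positively oriented plaquettes where `n > 0`. -/
def hatCur (m N : ℕ) (n : OPlaq m → ℤ) : Set (OPlaq m) :=
  {p | p ∈ C2plus m N ∧ 0 < n p}

/-- The probability that iid Bernoulli plaquette percolation `Ψ_q` on `C_2(B_N)^+`
produces exactly the configuration (subset) `A`. -/
noncomputable def bernoulli (m N : ℕ) (q : ℝ) (A : Set (OPlaq m)) : ℝ :=
  ∏ᶠ p ∈ C2plus m N, (if p ∈ A then q else 1 - q)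

/-- `∂P ≡ γ (mod 2)`: for every edge `e ∈ C_1(B_N)` the number of plaquettes of `P`
whose boundary contains `e` or `-e` is congruent to `γ(e)` mod `2`. -/
def BdryCong (m N : ℕ) (P : Set (OPlaq m)) (γ : OEdge m → ℤ) : Prop :=
  ∀ e ∈ C1 m N,
    ((Nat.card ↥{p ∈ P | e ∈ p.bdry ∨ OEdge.neg e ∈ p.bdry} : ZMod 2)) = (γ e : ZMod 2)

/-- `𝒫_γ`: subsets of `C_2(B_N)^+` containing a subset with boundary `γ (mod 2)`. -/
def PlaqSet (m N : ℕ) (γ : OEdge m → ℤ) : Set (Set (OPlaq m)) :=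
  {P | P ⊆ C2plus m N ∧ ∃ P', P' ⊆ P ∧ BdryCong m N P' γ}

/-- `N₀(P)`: the number of `σ ∈ Ω^1(B_N,ℤ₂)` with `dσ(p) = 0` for all `p ∈ P`. -/
noncomputable def N0 (m N : ℕ) (P : Set (OPlaq m)) : ℕ :=
  Nat.card ↥{σ ∈ Omega1 m N | ∀ p ∈ P, dOne σ p = 0}

/-- The random cluster weight `N₀(P) q^{|P|} (1-q)^{|C_2(B_N)^+ ∖ P|}`. -/
noncomputable def rcmWeight (m N : ℕ) (q : ℝ) (P : Set (OPlaq m)) : ℝ :=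
  (N0 m N P : ℝ) * q ^ (Nat.card ↥P) * (1 - q) ^ (Nat.card ↥(C2plus m N \ P))

/-- The random cluster model `φ^γ_{B_N,q}`: probability mass of `P` (zero off `𝒫_γ`). -/
noncomputable def rcmProb (m N : ℕ) (q : ℝ) (γ : OEdge m → ℤ) (P : Set (OPlaq m)) : ℝ :=
  (if P ∈ PlaqSet m N γ then rcmWeight m N q P else 0) /
    ∑ᶠ P' ∈ PlaqSet m N γ, rcmWeight m N q P'

/-- `S_γ(P)`: the subsets of `P` with boundary `γ (mod 2)`. -/
def Sset (m N : ℕ) (γ : OEdge m → ℤ) (P : Set (OPlaq m)) : Set (Set (OPlaq m)) :=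
  {P' | P' ⊆ P ∧ BdryCong m N P' γ}

/-- The `ℤ₂`-valued `2`-form whose support among positively oriented plaquettes is `P'`. -/
noncomputable def formOf {m : ℕ} (P' : Set (OPlaq m)) : OPlaq m → ZMod 2 :=
  fun p => if p ∈ P' ∨ OPlaq.neg p ∈ P' then 1 else 0

/-- The vertices of the support of a loop. -/
def vertsOf (m : ℕ) (γ : OEdge m → ℤ) : Set (Site m) :=
  {x | ∃ e, γ e ≠ 0 ∧ (x = OEdge.src e ∨ x = OEdge.tgt e)}

/-- The graph (`ℓ¹`) distance between two sites of `ℤ^m`. -/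
def distL1 (m : ℕ) (x y : Site m) : ℕ := ∑ i, (x i - y i).natAbs

/-- The minimal graph distance between the supports of two loops. -/
noncomputable def suppDist (m : ℕ) (γ γ' : OEdge m → ℤ) : ℕ :=
  sInf {d | ∃ x ∈ vertsOf m γ, ∃ y ∈ vertsOf m γ', d = distL1 m x y}

/-- `area(γ) = min_{n ∈ 𝒞_γ} Σ_{p ∈ C_2(B_N)^+} n(p)`. -/
noncomputable def areaOf (m N : ℕ) (γ : OEdge m → ℤ) : ℕ :=
  sInf {k : ℕ | ∃ n ∈ CurSet m N γ, (∑ᶠ p ∈ C2plus m N, n p) = (k : ℤ)}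

/-- Translation of a loop by a lattice vector. -/
def translate (m : ℕ) (v : Site m) (γ : OEdge m → ℤ) : OEdge m → ℤ :=
  fun e => γ ⟨e.base - v, e.dir, e.ori⟩

/-- The site `a·e₀ + b·e₁` in the fixed coordinate plane spanned by the first two
coordinate directions. -/
def planeSite (m : ℕ) (h : 1 < m) (a b : ℤ) : Site m :=
  fun j => if j = (⟨0, by omega⟩ : Fin m) then a else if j = (⟨1, h⟩ : Fin m) then b else 0

/-- The axis-parallel rectangular loop `γ_{R,T}` with corners `0, R·e₀, R·e₀+T·e₁, T·e₁`
in the fixed coordinate plane spanned by the first two coordinate directions. -/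
noncomputable def rectLoop (m : ℕ) (h : 1 < m) (R T : ℕ) : OEdge m → ℤ := fun e =>
  (∑ k ∈ Finset.range R,
    ((if e = ⟨planeSite m h k 0, ⟨0, by omega⟩, true⟩ then (1 : ℤ) else 0)
      - (if e = OEdge.neg ⟨planeSite m h k 0, ⟨0, by omega⟩, true⟩ then 1 else 0)
      - (if e = ⟨planeSite m h k T, ⟨0, by omega⟩, true⟩ then 1 else 0)
      + (if e = OEdge.neg ⟨planeSite m h k T, ⟨0, by omega⟩, true⟩ then 1 else 0)))
  + (∑ k ∈ Finset.range T,
    ((if e = ⟨planeSite m h R k, ⟨1, h⟩, true⟩ then (1 : ℤ) else 0)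
      - (if e = OEdge.neg ⟨planeSite m h R k, ⟨1, h⟩, true⟩ then 1 else 0)
      - (if e = ⟨planeSite m h 0 k, ⟨1, h⟩, true⟩ then 1 else 0)
      + (if e = OEdge.neg ⟨planeSite m h 0 k, ⟨1, h⟩, true⟩ then 1 else 0)))


/-! Grouping the currents `n₁ ≤ n` by their parity `ω = n₁ mod 2` factorises the sum: the fibre
over `ω` contributes `∏_p Σ_{k ≤ n(p), k ≡ ω(p)} C(n(p), k)`, and the parities of the currents
with source `γ` are exactly the `ℤ₂`-forms `ω` with `δω = γ`. Since the even and the odd binomial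
coefficients of `b ≥ 1` have the same sum, the factor at `p` depends on `ω(p)` only where
`n(p) = 0`. A current `q ≤ n` with source `γ₁` is even wherever `n` vanishes, so `ω ↦ ω + q`
is a weight-preserving bijection from the parities with source `γ₁` onto those with source `0`.
-/

section ParityBinomial

open Finset

theorem sum_choose_filter_parity_eq {b : ℕ} (hb : b ≠ 0) (ε ε' : ZMod 2) :
    ∑ k ∈ range (b + 1) with ((k : ℕ) : ZMod 2) = ε, b.choose k
      = ∑ k ∈ range (b + 1) with ((k : ℕ) : ZMod 2) = ε', b.choose k := by
  suffices h : ∑ k ∈ range (b + 1) with ((k : ℕ) : ZMod 2) = 0, b.choose k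
      = ∑ k ∈ range (b + 1) with ((k : ℕ) : ZMod 2) = 1, b.choose k by
    fin_cases ε <;> fin_cases ε' <;> first | rfl | exact h | exact h.symm
  have hodd : ∀ x : ZMod 2, ¬x = 0 ↔ x = 1 := by decide
  have halt := Int.alternating_sum_range_choose_of_ne hb
  rw [← sum_filter_add_sum_filter_not _ (fun k : ℕ => (k : ZMod 2) = 0)] at halt
  simp only [hodd] at halt
  have h_even : ∑ k ∈ range (b + 1) with ((k : ℕ) : ZMod 2) = 0, (-1 : ℤ) ^ k * b.choose k
      = ∑ k ∈ range (b + 1) with ((k : ℕ) : ZMod 2) = 0, (b.choose k : ℤ) :=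
    sum_congr rfl fun k hk => by
      rw [(ZMod.natCast_eq_zero_iff_even.mp (mem_filter.mp hk).2).neg_one_pow, one_mul]
  have h_odd : ∑ k ∈ range (b + 1) with ((k : ℕ) : ZMod 2) = 1, (-1 : ℤ) ^ k * b.choose k
      = -∑ k ∈ range (b + 1) with ((k : ℕ) : ZMod 2) = 1, (b.choose k : ℤ) := by
    rw [← sum_neg_distrib]
    exact sum_congr rfl fun k hk => by
      rw [(ZMod.natCast_eq_one_iff_odd.mp (mem_filter.mp hk).2).neg_one_pow, neg_one_mul]
  rw [h_even, h_odd, ← sub_eq_add_neg, sub_eq_zero] at halt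
  exact_mod_cast halt

variable {ι : Type*} [Fintype ι] [DecidableEq ι]

noncomputable def parityBinomSum (b : ι → ℕ) (S : Set (ι → ZMod 2)) : ℕ :=
  ∑ k ∈ Fintype.piFinset (fun i => range (b i + 1)) with (fun i => (k i : ZMod 2)) ∈ S,
    ∏ i, (b i).choose (k i)

theorem parityBinomSum_eq_sum_prod (b : ι → ℕ) (S : Set (ι → ZMod 2)) :
    parityBinomSum b S = ∑ ω with ω ∈ S,
      ∏ i, ∑ k ∈ range (b i + 1) with ((k : ℕ) : ZMod 2) = ω i, (b i).choose k := by
  rw [parityBinomSum, ← sum_fiberwise_of_maps_to (t := univ.filter (· ∈ S))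
    (g := fun k i => (k i : ZMod 2)) fun k hk => by simpa using (mem_filter.mp hk).2]
  refine sum_congr rfl fun ω hω => ?_
  rw [prod_univ_sum, filter_filter]
  congr 1
  ext k
  simp only [mem_filter, Fintype.mem_piFinset, funext_iff]
  constructor
  · rintro ⟨hk, -, hkω⟩
    exact fun i => ⟨hk i, hkω i⟩
  · intro hk
    refine ⟨fun i => (hk i).1, ?_, fun i => (hk i).2⟩
    convert (mem_filter.mp hω).2 using 1
    exact funext fun i => (hk i).2

theorem parityBinomSum_preimage_add (b : ι → ℕ) (S : Set (ι → ZMod 2)) {c : ι → ZMod 2}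
    (hc : ∀ i, c i ≠ 0 → b i ≠ 0) :
    parityBinomSum b ((· + c) ⁻¹' S) = parityBinomSum b S := by
  set G : (ι → ZMod 2) → ℕ :=
    fun ω => ∏ i, ∑ k ∈ range (b i + 1) with ((k : ℕ) : ZMod 2) = ω i, (b i).choose k
  have hG : ∀ ω, G (ω + c) = G ω := fun ω => prod_congr rfl fun i _ => by
    by_cases hci : c i = 0
    · simp only [Pi.add_apply, hci, add_zero]
    · exact sum_choose_filter_parity_eq (hc i hci) _ _
  rw [parityBinomSum_eq_sum_prod, parityBinomSum_eq_sum_prod]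
  change ∑ ω with ω + c ∈ S, G ω = ∑ ω with ω ∈ S, G ω
  rw [sum_filter, sum_filter,
    ← Equiv.sum_comp (Equiv.addRight c) fun ω => if ω ∈ S then G ω else 0]
  exact sum_congr rfl fun ω _ => by simp [hG]

end ParityBinomial

section Plaquettes

variable {m N : ℕ}

@[simp]
theorem OPlaq.neg_neg (p : OPlaq m) : p.neg.neg = p := by
  simp [OPlaq.neg]

theorem OPlaq.neg_mem_C2plus_of_notMem {p : OPlaq m} (hp : p ∈ C2 m N) (hp' : p ∉ C2plus m N) :
    p.neg ∈ C2plus m N :=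
  ⟨hp, by simpa [OPlaq.neg, C2plus, hp] using hp'⟩

theorem OPlaq.neg_notMem_C2plus {p : OPlaq m} (hp : p ∈ C2plus m N) : p.neg ∉ C2plus m N :=
  fun h => by simpa [OPlaq.neg, hp.2] using h.2

theorem finite_inBox : {x : Site m | inBox m N x}.Finite :=
  (Set.Finite.pi' fun _ => Set.finite_Icc (-(N : ℤ)) N).subset fun _ hx i => abs_le.mp (hx i)

theorem finite_C2 : (C2 m N).Finite := by
  have hinj : Function.Injective fun p : OPlaq m => (p.base, p.dir1, p.dir2, p.ori) := by
    rintro ⟨⟩ ⟨⟩ h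
    simpa using h
  refine ((finite_inBox.prod (Set.finite_univ (α := Fin m × Fin m × Bool))).preimage
    hinj.injOn).subset fun p hp => ⟨hp.2 p.base (by simp [OPlaq.corners]), trivial⟩

noncomputable def posPlaq (m N : ℕ) : Finset (OPlaq m) :=
  (finite_C2.subset fun _ hp => hp.1 : (C2plus m N).Finite).toFinset

theorem mem_posPlaq {p : OPlaq m} : p ∈ posPlaq m N ↔ p ∈ C2plus m N :=
  Set.Finite.mem_toFinset _

theorem finprod_mem_C2plus_eq_prod {M : Type*} [CommMonoid M] (f : OPlaq m → M) :
    ∏ᶠ p ∈ C2plus m N, f p = ∏ i : posPlaq m N, f i := by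
  rw [Finset.prod_coe_sort, ← finprod_mem_coe_finset]
  congr
  ext p
  simp [mem_posPlaq]

end Plaquettes

section AntisymmExt

variable {m N : ℕ} {α β : Type*}

noncomputable def antisymmExt [AddGroup α] (f : posPlaq m N → α) (p : OPlaq m) : α :=
  if h : p ∈ posPlaq m N then f ⟨p, h⟩
  else if h' : p.neg ∈ posPlaq m N then -f ⟨p.neg, h'⟩ else 0

theorem antisymmExt_add [AddCommGroup α] (f g : posPlaq m N → α) :
    antisymmExt (f + g) = antisymmExt f + antisymmExt g := by
  funext p
  simp only [antisymmExt, Pi.add_apply]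
  split_ifs <;> simp [add_comm]

variable [AddGroup α]

@[simp]
theorem antisymmExt_coe (f : posPlaq m N → α) (i : posPlaq m N) : antisymmExt f i = f i :=
  dif_pos i.2

theorem antisymmExt_of_notMem_C2 (f : posPlaq m N → α) {p : OPlaq m} (hp : p ∉ C2 m N) :
    antisymmExt f p = 0 := by
  have h : p ∉ posPlaq m N := fun h => hp (mem_posPlaq.mp h).1
  have h' : p.neg ∉ posPlaq m N := fun h => hp (mem_posPlaq.mp h).1
  simp [antisymmExt, h, h']

theorem antisymmExt_neg (f : posPlaq m N → α) (p : OPlaq m) :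
    antisymmExt f p.neg = -antisymmExt f p := by
  by_cases hp : p ∈ posPlaq m N
  · have hp' : p.neg ∉ posPlaq m N :=
      mt mem_posPlaq.mp (OPlaq.neg_notMem_C2plus (mem_posPlaq.mp hp))
    simp [antisymmExt, hp, hp']
  · by_cases hp' : p.neg ∈ posPlaq m N <;> simp [antisymmExt, hp, hp']

theorem map_antisymmExt [AddGroup β] (φ : α →+ β) (f : posPlaq m N → α) (p : OPlaq m) :
    φ (antisymmExt f p) = antisymmExt (φ ∘ f) p := by
  unfold antisymmExt
  split_ifs <;> simp

theorem antisymmExt_restrict {f : OPlaq m → α} (hf : ∀ p, p ∉ C2 m N → f p = 0)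
    (hneg : ∀ p, f p.neg = -f p) : antisymmExt (fun i : posPlaq m N => f i) = f := by
  funext p
  by_cases hp : p ∈ posPlaq m N
  · exact antisymmExt_coe _ ⟨p, hp⟩
  by_cases hC2 : p ∈ C2 m N
  · have hp' := OPlaq.neg_mem_C2plus_of_notMem hC2 (mt mem_posPlaq.mpr hp)
    rw [← OPlaq.neg_neg p, antisymmExt_neg, hneg,
      antisymmExt_coe _ ⟨p.neg, mem_posPlaq.mpr hp'⟩]
  · rw [antisymmExt_of_notMem_C2 _ hC2, hf p hC2]

end AntisymmExt

section Currents

variable {m N : ℕ}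

theorem add_mem_HTset {γ γ' γ'' : OEdge m → ℤ} {x y : OPlaq m → ZMod 2}
    (hx : x ∈ HTset m N γ) (hy : y ∈ HTset m N γ')
    (hγ : ∀ e, (γ'' e : ZMod 2) = γ e + γ' e) : x + y ∈ HTset m N γ'' := by
  refine ⟨fun p hp => by simp [hx.1 p hp, hy.1 p hp],
    fun p => by simp [hx.2.1 p, hy.2.1 p, add_comm], fun e he => ?_⟩
  have hcob : (cob m N e).Finite := finite_C2.subset fun _ hp => hp.1
  rw [hγ, ← hx.2.2 e he, ← hy.2.2 e he]
  exact finsum_mem_add_distrib hcob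

theorem add_mem_HTset_zero_iff {γ : OEdge m → ℤ} {x y : OPlaq m → ZMod 2}
    (hy : y ∈ HTset m N γ) : x + y ∈ HTset m N 0 ↔ x ∈ HTset m N γ := by
  have hyy : y + y = 0 := funext fun p => CharTwo.add_self_eq_zero (y p)
  exact ⟨fun h => by simpa [add_assoc, hyy] using add_mem_HTset (γ'' := γ) h hy (by simp),
    fun h => add_mem_HTset h hy (by simp [CharTwo.add_self_eq_zero])⟩

theorem mem_CurSet_iff {γ : OEdge m → ℤ} {n : OPlaq m → ℤ} :
    n ∈ CurSet m N γ ↔ IsCurrent m N n ∧ (fun p => (n p : ZMod 2)) ∈ HTset m N γ := by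
  refine and_congr_right fun hn => ?_
  have hsum : ∀ x y : ZMod 2, x + y = 0 ↔ y = x := by decide
  exact ⟨fun h => ⟨fun p hp => by simp [hn.1 p hp], fun p => by simp [hn.2.1 p],
    fun e he => (hsum _ _).mp (h e he)⟩, fun h e he => (hsum _ _).mpr (h.2.2 e he)⟩

theorem finsum_choose_currents_eq_parityBinomSum (γ : OEdge m → ℤ) {n : OPlaq m → ℤ}
    (hn : ∀ p ∈ C2plus m N, 0 ≤ n p) :
    ∑ᶠ n₁ ∈ {n₁ | n₁ ∈ CurSet m N γ ∧ leOn m N n₁ n},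
        ∏ᶠ p ∈ C2plus m N, ((n p).toNat.choose (n₁ p).toNat : ℝ)
      = parityBinomSum (fun i : posPlaq m N => (n i).toNat)
          {ω | antisymmExt ω ∈ HTset m N γ} := by
  set E : (posPlaq m N → ℕ) → OPlaq m → ℤ := fun k => antisymmExt fun i => (k i : ℤ)
  have hE_coe : ∀ k (i : posPlaq m N), E k i = k i := fun k i => antisymmExt_coe _ i
  have hE_par : ∀ k, (fun p => (E k p : ZMod 2)) = antisymmExt fun i => (k i : ZMod 2) :=
    fun k => funext fun p => by
      simpa [Function.comp_def] using
        map_antisymmExt (Int.castAddHom (ZMod 2)) (fun i => (k i : ℤ)) p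
  have hE_cur : ∀ k, IsCurrent m N (E k) := fun k =>
    ⟨fun _ => antisymmExt_of_notMem_C2 _, antisymmExt_neg _, fun p hp => by
      rw [hE_coe k ⟨p, mem_posPlaq.mpr hp⟩]
      positivity⟩
  have himage : {n₁ | n₁ ∈ CurSet m N γ ∧ leOn m N n₁ n}
      = E '' ↑{k ∈ Fintype.piFinset (fun i : posPlaq m N => Finset.range ((n i).toNat + 1)) |
          (fun i => (k i : ZMod 2)) ∈ {ω | antisymmExt ω ∈ HTset m N γ}} := by
    ext n₁
    simp only [Set.mem_ofPred_eq, Set.mem_image, Finset.coe_filter, mem_CurSet_iff,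
      Fintype.mem_piFinset, Finset.mem_range]
    constructor
    · rintro ⟨⟨hcur, hpar⟩, hle⟩
      have hE : E (fun i => (n₁ i).toNat) = n₁ := by
        refine (congrArg antisymmExt (funext fun i => ?_)).trans
          (antisymmExt_restrict hcur.1 hcur.2.1)
        exact Int.toNat_of_nonneg (hcur.2.2 i (mem_posPlaq.mp i.2))
      refine ⟨fun i => (n₁ i).toNat, ⟨fun i => ?_, ?_⟩, hE⟩
      · have := hle i (mem_posPlaq.mp i.2)
        show (n₁ i).toNat < (n i).toNat + 1
        omega
      · rwa [← hE_par, hE]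
    · rintro ⟨k, ⟨hk, hpar⟩, rfl⟩
      refine ⟨⟨hE_cur k, by rwa [hE_par]⟩, fun p hp => ?_⟩
      have hkp : k ⟨p, mem_posPlaq.mpr hp⟩ < (n p).toNat + 1 := hk ⟨p, mem_posPlaq.mpr hp⟩
      have := hn p hp
      rw [hE_coe k ⟨p, mem_posPlaq.mpr hp⟩]
      omega
  have hinj : Function.Injective E := fun k k' h => funext fun i => by
    exact_mod_cast (hE_coe k i).symm.trans ((congrFun h i).trans (hE_coe k' i))
  rw [himage, finsum_mem_image hinj.injOn, finsum_mem_coe_finset,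
    parityBinomSum, Nat.cast_sum]
  refine Finset.sum_congr rfl fun k _ => ?_
  rw [finprod_mem_C2plus_eq_prod, Nat.cast_prod]
  simp [hE_coe]

end Currents

theorem switching_fixed_current_general (m N : ℕ)
    (γ₁ γ₁₂ : OEdge m → ℤ)
    (n : OPlaq m → ℤ) (hn : n ∈ CurSet m N γ₁₂) :
    (∑ᶠ n₁ ∈ {n₁ : OPlaq m → ℤ | n₁ ∈ CurSet m N γ₁ ∧ leOn m N n₁ n},
        ∏ᶠ p ∈ C2plus m N, (Nat.choose (n p).toNat ((n₁ p).toNat) : ℝ))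
      = (if ∃ q ∈ CurSet m N γ₁, leOn m N q n then (1 : ℝ) else 0) *
          ∑ᶠ n₁ ∈ {n₁ : OPlaq m → ℤ | n₁ ∈ CurSet m N (0 : OEdge m → ℤ) ∧ leOn m N n₁ n},
            ∏ᶠ p ∈ C2plus m N, (Nat.choose (n p).toNat ((n₁ p).toNat) : ℝ) := by
  have hn₀ : ∀ p ∈ C2plus m N, 0 ≤ n p := hn.1.2.2
  split_ifs with hex
  · obtain ⟨q, hq, hqn⟩ := hex
    obtain ⟨hq_cur, hq_par⟩ := mem_CurSet_iff.mp hq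
    have hS : {ω : posPlaq m N → ZMod 2 | antisymmExt ω ∈ HTset m N γ₁}
        = (· + fun i : posPlaq m N => (q i : ZMod 2)) ⁻¹'
            {ω | antisymmExt ω ∈ HTset m N 0} := by
      ext ω
      simp [antisymmExt_add, antisymmExt_restrict hq_par.1 hq_par.2.1,
        add_mem_HTset_zero_iff hq_par]
    rw [one_mul, finsum_choose_currents_eq_parityBinomSum γ₁ hn₀,
      finsum_choose_currents_eq_parityBinomSum 0 hn₀, hS, parityBinomSum_preimage_add]
    intro i hi
    have hqi : q i ≠ 0 := fun h => hi (by simp [h])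
    have hqi_nonneg := hq_cur.2.2 i (mem_posPlaq.mp i.2)
    have hqi_le := hqn i (mem_posPlaq.mp i.2)
    omega
  · have hempty : {n₁ | n₁ ∈ CurSet m N γ₁ ∧ leOn m N n₁ n} = ∅ :=
      Set.eq_empty_of_forall_notMem fun n₁ h => hex ⟨n₁, h⟩
    rw [zero_mul, hempty, finsum_mem_empty]

/-- **Switching identity for a fixed total current** (equation (5.4)). -/
theorem switching_fixed_current (m N : ℕ) (hm : 3 ≤ m) (hN : 1 ≤ N)
    (γ₁ γ₂ γ₁₂ : OEdge m → ℤ)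
    (h₁ : LoopIn m N γ₁) (h₂ : LoopIn m N γ₂) (h₁₂ : LoopIn m N γ₁₂)
    (hcat : ∀ e, ((γ₁₂ e : ZMod 2)) = (γ₁ e : ZMod 2) + (γ₂ e : ZMod 2))
    (n : OPlaq m → ℤ) (hn : n ∈ CurSet m N γ₁₂) :
    (∑ᶠ n₁ ∈ {n₁ : OPlaq m → ℤ | n₁ ∈ CurSet m N γ₁ ∧ leOn m N n₁ n},
        ∏ᶠ p ∈ C2plus m N, (Nat.choose (n p).toNat ((n₁ p).toNat) : ℝ))
      = (if ∃ q ∈ CurSet m N γ₁, leOn m N q n then (1 : ℝ) else 0) *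
          ∑ᶠ n₁ ∈ {n₁ : OPlaq m → ℤ | n₁ ∈ CurSet m N (0 : OEdge m → ℤ) ∧ leOn m N n₁ n},
            ∏ᶠ p ∈ C2plus m N, (Nat.choose (n p).toNat ((n₁ p).toNat) : ℝ) :=
  switching_fixed_current_general m N γ₁ γ₁₂ n hn

end LGT
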